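/- arXiv:2211.02871 — 6 statements merged into one kernel-verified Lean document; each statement's English description precedes it below -/
import Mathlib

section
/- Let N ≥ 2, let ρ be a positive semidefinite N-qubit operator, and let α be a real number with −1 ≤ α ≤ 2. Then for every i ∈ Fin N, the matrix σ = Tr(ρ)·𝟙 + α·ρ is biseparable across the 1:(N−1) bipartition at qubit i. -/
open scoped ComplexOrder

noncomputable section

/-- Separability of an `N`-qubit matrix across the bipartition `X : Xᶜ`. -/
def SepAcross {N : ℕ} (X : Finset (Fin N))
    (σ : Matrix (Fin N → Fin 2) (Fin N → Fin 2) ℂ) : Prop :=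
  ∃ (K : ℕ)
    (A : Fin K → Matrix ({i // i ∈ X} → Fin 2) ({i // i ∈ X} → Fin 2) ℂ)
    (B : Fin K → Matrix ({i // i ∈ Xᶜ} → Fin 2) ({i // i ∈ Xᶜ} → Fin 2) ℂ),
    (∀ k, (A k).PosSemidef) ∧ (∀ k, (B k).PosSemidef) ∧
    ∀ x y, σ x y =
      ∑ k, A k (fun i => x i.1) (fun i => y i.1) * B k (fun i => x i.1) (fun i => y i.1)

/-- Partial transpose with respect to the qubits in `X`. -/
def pt {N : ℕ} (X : Finset (Fin N))
    (σ : Matrix (Fin N → Fin 2) (Fin N → Fin 2) ℂ) :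
    Matrix (Fin N → Fin 2) (Fin N → Fin 2) ℂ :=
  fun x y => σ (fun i => if i ∈ X then y i else x i) (fun i => if i ∈ X then x i else y i)

/-- The Dicke state `|S_k^N⟩`. -/
def dicke (N k : ℕ) : (Fin N → Fin 2) → ℂ :=
  fun x => if (Finset.univ.filter (fun i => x i = 1)).card = k
    then ((Real.sqrt (N.choose k))⁻¹ : ℝ) else 0

/-- The projector onto the symmetric subspace of `N` qubits. -/
def symProj (N : ℕ) : Matrix (Fin N → Fin 2) (Fin N → Fin 2) ℂ :=
  fun x y => ∑ k ∈ Finset.range (N + 1), dicke N k x * star (dicke N k y)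

/-- Full separability of an `N`-qubit matrix. -/
def FullySep {N : ℕ} (σ : Matrix (Fin N → Fin 2) (Fin N → Fin 2) ℂ) : Prop :=
  ∃ (K : ℕ) (A : Fin K → Fin N → Matrix (Fin 2) (Fin 2) ℂ),
    (∀ k i, (A k i).PosSemidef) ∧
    ∀ x y, σ x y = ∑ k, ∏ i, A k i (x i) (y i)

/-- The second Pauli matrix. -/
def pauliY : Matrix (Fin 2) (Fin 2) ℂ := !![0, -Complex.I; Complex.I, 0]

/-- The `N`-qubit operator acting as `σy` on each qubit in `X` and trivially elsewhere. -/
def pauliYat {N : ℕ} (X : Finset (Fin N)) :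
    Matrix (Fin N → Fin 2) (Fin N → Fin 2) ℂ :=
  fun x y => ∏ i, if i ∈ X then pauliY (x i) (y i) else (if x i = y i then 1 else 0)

/-- `(σy@X) · ρ^{T_X} · (σy@X)`. -/
def tildeAt {N : ℕ} (X : Finset (Fin N))
    (ρ : Matrix (Fin N → Fin 2) (Fin N → Fin 2) ℂ) :
    Matrix (Fin N → Fin 2) (Fin N → Fin 2) ℂ :=
  pauliYat X * pt X ρ * pauliYat X

/-- The Hankel matrix `M_l(q)` with entries `q_{i+j+l} / (N choose (i+j+l))`. -/
def hankel (N l : ℕ) (q : ℕ → ℝ) :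
    Matrix (Fin ((N - l) / 2 + 1)) (Fin ((N - l) / 2 + 1)) ℝ :=
  fun i j => q ((i : ℕ) + j + l) / (N.choose ((i : ℕ) + j + l))

/-- The diagonal symmetric state `Σ_k p_k |S_k^N⟩⟨S_k^N|`. -/
def rhoDS (N : ℕ) (p : ℕ → ℝ) : Matrix (Fin N → Fin 2) (Fin N → Fin 2) ℂ :=
  fun x y => ∑ k ∈ Finset.range (N + 1), (p k : ℂ) * dicke N k x * star (dicke N k y)

/-!
Write `ρ = ∑ₜ vₜ vₜ*`; since `ρ ↦ Tr(ρ) 𝟙 + α ρ` is linear and separable matrices form a convex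
cone, it suffices to treat one vector `v ∈ ℂ² ⊗ ℂᵈ` with halves `g₀, g₁ ∈ ℂᵈ`. A unitary on the
qubit, which preserves both separability and the map, makes `g₀ ⊥ g₁` (Schmidt form). Then
`Tr(vv*) 𝟙 + α vv*` is the average over `φ ∈ {±1, ±i}` of the product states
`(1, φ)(1, φ)* ⊗ w_φ w_φ*` with `w_φ = y₀ g₀ + φ̄ y₁ g₁`, which produces the off-diagonal block
`α g₀ g₁*` when `y₀ y₁ = α`, plus block-diagonal remainders `|a⟩⟨a| ⊗ (n 𝟙 + c₀ g₀g₀* + c₁ g₁g₁*)`.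
For orthogonal `g₀, g₁` these are positive as soon as `n + c_b ‖g_b‖² ≥ 0`, and for
`-1 ≤ α ≤ 2` the weights `y_b` can be chosen so that this holds.
-/

open Matrix
open scoped Kronecker

variable {ι κ : Type*}

variable (ι κ) in
def separableCone : PointedCone ℝ (Matrix (ι × κ) (ι × κ) ℂ) :=
  PointedCone.hull ℝ {M | ∃ A B, A.PosSemidef ∧ B.PosSemidef ∧ A ⊗ₖ B = M}

lemma kronecker_mem_separableCone {A : Matrix ι ι ℂ} {B : Matrix κ κ ℂ}
    (hA : A.PosSemidef) (hB : B.PosSemidef) : A ⊗ₖ B ∈ separableCone ι κ :=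
  PointedCone.subset_hull ⟨A, B, hA, hB, rfl⟩

lemma conjTranspose_mul_mul_mem_separableCone [Fintype ι] [Fintype κ] [DecidableEq κ]
    {M : Matrix (ι × κ) (ι × κ) ℂ} (hM : M ∈ separableCone ι κ) (U : Matrix ι ι ℂ) :
    (U ⊗ₖ (1 : Matrix κ κ ℂ))ᴴ * M * (U ⊗ₖ 1) ∈ separableCone ι κ := by
  induction hM using Submodule.span_induction with
  | mem M hM =>
    obtain ⟨A, B, hA, hB, rfl⟩ := hM
    rw [conjTranspose_kronecker, conjTranspose_one, ← mul_kronecker_mul, ← mul_kronecker_mul,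
      Matrix.one_mul, Matrix.mul_one]
    exact kronecker_mem_separableCone (hA.conjTranspose_mul_mul_same U) hB
  | zero => simp
  | add M M' _ _ h h' => simpa [Matrix.mul_add, Matrix.add_mul] using add_mem h h'
  | smul c M _ h => simpa [Matrix.mul_smul, Matrix.smul_mul] using Submodule.smul_mem _ c h

lemma sepAcross_of_mem_separableCone {N : ℕ} {X : Finset (Fin N)}
    (p : ({j // j ∈ X} → Fin 2) → ι)
    {M : Matrix (ι × ({j // j ∈ Xᶜ} → Fin 2)) (ι × ({j // j ∈ Xᶜ} → Fin 2)) ℂ}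
    (hM : M ∈ separableCone ι _) {σ : Matrix (Fin N → Fin 2) (Fin N → Fin 2) ℂ}
    (hσ : ∀ x y, σ x y = M (p fun j => x j, fun j => x j) (p fun j => y j, fun j => y j)) :
    SepAcross X σ := by
  obtain ⟨K, c, T, rfl⟩ := Submodule.mem_span_set'.mp hM
  choose A B hA hB hAB using fun k => (T k).2
  refine ⟨K, fun k => ((c k : ℝ) • A k).submatrix p p, B,
    fun k => ((hA k).smul (c k).2).submatrix p, hB, fun x y => ?_⟩
  simp [hσ, ← hAB, Matrix.sum_apply, smul_mul_assoc]

def reductionMap [Fintype ι] [DecidableEq ι] (α : ℝ) : Matrix ι ι ℂ →ₗ[ℂ] Matrix ι ι ℂ :=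
  (traceLinearMap ι ℂ ℂ).smulRight 1 + (α : ℂ) • LinearMap.id

section reductionMap

variable [Fintype ι] [DecidableEq ι] (α : ℝ)

lemma reductionMap_apply (ρ : Matrix ι ι ℂ) : reductionMap α ρ = ρ.trace • 1 + (α : ℂ) • ρ :=
  rfl

lemma conjTranspose_mul_reductionMap_mul [Fintype κ] [DecidableEq κ] (P : Matrix ι ι ℂ)
    {X : Matrix κ ι ℂ} (hX : Xᴴ * X = 1) :
    Xᴴ * reductionMap α (X * P * Xᴴ) * X = reductionMap α P := by
  have htrace : (X * P * Xᴴ).trace = P.trace := by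
    rw [trace_mul_cycle, hX, Matrix.one_mul]
  simp only [reductionMap_apply, htrace, Matrix.mul_add, Matrix.add_mul, Matrix.mul_smul,
    Matrix.smul_mul, Matrix.mul_one, hX, ← Matrix.mul_assoc]
  simp only [Matrix.mul_assoc, hX, Matrix.mul_one, Matrix.one_mul]

lemma reductionMap_submatrix [Fintype κ] [DecidableEq κ] (ρ : Matrix ι ι ℂ) (e : κ ≃ ι) :
    reductionMap α (ρ.submatrix e e) = (reductionMap α ρ).submatrix e e := by
  have htrace : (ρ.submatrix e e).trace = ρ.trace := e.sum_comp fun j => ρ j j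
  rw [reductionMap_apply, reductionMap_apply, htrace, ← submatrix_one_equiv e]
  rfl

end reductionMap

lemma exists_mem_unitaryGroup_pairwise_orthogonal_rows [Fintype ι] [DecidableEq ι] [Fintype κ]
    (G : Matrix ι κ ℂ) :
    ∃ U ∈ unitaryGroup ι ℂ, Pairwise fun a b => star ((U * G) a) ⬝ᵥ (U * G) b = 0 := by
  have hW := isHermitian_mul_conjTranspose_self G
  refine ⟨star hW.eigenvectorUnitary, Unitary.star_mem hW.eigenvectorUnitary.2, fun a b hab => ?_⟩
  have hdiag := congrFun (congrFun hW.conjStarAlgAut_star_eigenvectorUnitary b) a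
  rw [Unitary.conjStarAlgAut_star_apply, diagonal_apply_ne _ hab.symm] at hdiag
  set E : Matrix ι ι ℂ := (hW.eigenvectorUnitary : Matrix ι ι ℂ)
  rw [show star E * (G * Gᴴ) * E = (star E * G) * (star E * G)ᴴ by
      simp [conjTranspose_mul, Matrix.mul_assoc, star_eq_conjTranspose]] at hdiag
  simpa [dotProduct, mul_apply, mul_comm] using hdiag

section vecMulVec

variable [Fintype κ]

lemma ofReal_re_star_dotProduct_self (v : κ → ℂ) :
    (((star v ⬝ᵥ v).re : ℝ) : ℂ) = star v ⬝ᵥ v :=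
  (Complex.eq_re_of_ofReal_le (r := 0) (by
    rw [Complex.ofReal_zero]; exact dotProduct_star_self_nonneg v)).symm

lemma vecMulVec_ofReal_smul (r s : ℝ) (u w : κ → ℂ) :
    vecMulVec ((r : ℂ) • u) (star ((s : ℂ) • w)) = ((r * s : ℝ) : ℂ) • vecMulVec u (star w) := by
  rw [star_smul, Complex.star_def, Complex.conj_ofReal, smul_vecMulVec, vecMulVec_smul, smul_smul,
    Complex.ofReal_mul]

lemma vecMulVec_star_mul_vecMulVec_star (u v : κ → ℂ) :
    vecMulVec u (star u) * vecMulVec v (star v) = (star u ⬝ᵥ v) • vecMulVec u (star v) := by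
  rw [vecMulVec_mul_vecMulVec, vecMulVec_smul]

lemma posSemidef_smul_vecMulVec_of_nonneg {n c : ℝ} (v : κ → ℂ)
    (h : 0 ≤ n + c * (star v ⬝ᵥ v).re) :
    (((n * (star v ⬝ᵥ v).re⁻¹ + c : ℝ) : ℂ) • vecMulVec v (star v)).PosSemidef := by
  rcases eq_or_ne v 0 with rfl | hv
  · simpa using PosSemidef.zero
  have hN : 0 < (star v ⬝ᵥ v).re := by
    simpa using (Complex.lt_def.mp (dotProduct_star_self_pos_iff.mpr hv)).1
  refine (posSemidef_vecMulVec_self_star v).smul (Complex.zero_le_real.mpr ?_)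
  rw [← div_eq_mul_inv, div_add' _ _ _ hN.ne']
  exact div_nonneg (by linarith) hN.le

lemma posSemidef_smul_one_add_sum_smul_vecMulVec [Fintype ι] [DecidableEq ι] [DecidableEq κ]
    {g : ι → κ → ℂ} (hg : Pairwise fun a b => star (g a) ⬝ᵥ g b = 0) {n : ℝ} (hn : 0 ≤ n)
    (c : ι → ℝ) (hc : ∀ a, 0 ≤ n + c a * (star (g a) ⬝ᵥ g a).re) :
    ((n : ℂ) • (1 : Matrix κ κ ℂ) + ∑ a, (c a : ℂ) • vecMulVec (g a) (star (g a))).PosSemidef := by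
  set P : ι → Matrix κ κ ℂ := fun a => vecMulVec (g a) (star (g a))
  set w : ι → ℝ := fun a => (star (g a) ⬝ᵥ g a).re⁻¹
  -- the orthogonal projection onto the span of the `g a`; terms with `g a = 0` vanish as `0⁻¹ = 0`
  set J := ∑ a, (w a : ℂ) • P a
  have hPP : ∀ a b, P a * P b = if a = b then ((w a)⁻¹ : ℂ) • P a else 0 := by
    intro a b
    simp only [P, vecMulVec_star_mul_vecMulVec_star]
    split_ifs with hab
    · subst hab; simp [w, ofReal_re_star_dotProduct_self]
    · simp [hg hab]
  have hJJ : J * J = J := by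
    simp only [J, Finset.sum_mul, Finset.mul_sum, smul_mul_smul_comm, hPP, smul_ite, smul_zero,
      Finset.sum_ite_eq', Finset.mem_univ, if_true, smul_smul, mul_self_mul_inv]
  have hJ : Jᴴ = J := by simp [J, P, conjTranspose_sum, conjTranspose_smul, conjTranspose_vecMulVec]
  have hQ : (1 - J).PosSemidef := by
    have hidem : (1 - J) * (1 - J) = 1 - J := by
      rw [Matrix.sub_mul, Matrix.one_mul, Matrix.mul_sub, Matrix.mul_one, hJJ, sub_self, sub_zero]
    have := posSemidef_conjTranspose_mul_self (1 - J)
    rwa [conjTranspose_sub, conjTranspose_one, hJ, hidem] at this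
  have hdecomp : (n : ℂ) • (1 : Matrix κ κ ℂ) + ∑ a, (c a : ℂ) • P a
      = (n : ℂ) • (1 - J) + ∑ a, ((n * w a + c a : ℝ) : ℂ) • P a := by
    simp only [J, smul_sub, Finset.smul_sum, smul_smul, Complex.ofReal_add, Complex.ofReal_mul,
      add_smul, Finset.sum_add_distrib]
    abel
  rw [hdecomp]
  exact (hQ.smul (Complex.zero_le_real.mpr hn)).add
    (posSemidef_sum _ fun a _ => posSemidef_smul_vecMulVec_of_nonneg (g a) (hc a))

end vecMulVec

/-- The weights of the phase twirl: `y₀ y₁ = α` reproduces the off-diagonal block of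
`Tr(vv*) 𝟙 + α vv*`, and the bounds keep the block-diagonal remainders positive. -/
lemma exists_mul_eq_and_sq_mul_le {n₀ n₁ α : ℝ} (h₀ : 0 ≤ n₀) (h₁ : 0 ≤ n₁) (hα₁ : -1 ≤ α)
    (hα₂ : α ≤ 2) :
    ∃ y₀ y₁ : ℝ, (y₀ * y₁ = α ∨ n₀ = 0 ∨ n₁ = 0) ∧ y₀ ^ 2 * n₀ ≤ n₀ + n₁ + min α 0 * n₀ ∧
      y₁ ^ 2 * n₁ ≤ n₀ + n₁ + min α 0 * n₁ := by
  set m := min α 0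
  have hm : -1 ≤ m := le_min hα₁ (by norm_num)
  by_cases hdeg : n₀ = 0 ∨ n₁ = 0
  · exact ⟨0, 0, Or.inr hdeg, by nlinarith, by nlinarith⟩
  rw [not_or] at hdeg
  replace h₀ := lt_of_le_of_ne h₀ (Ne.symm hdeg.1)
  replace h₁ := lt_of_le_of_ne h₁ (Ne.symm hdeg.2)
  have hc : 0 < n₀ + n₁ + m * n₀ := by nlinarith [min_le_right α 0]
  have key : α ^ 2 * (n₀ * n₁) ≤ (n₀ + n₁ + m * n₀) * (n₀ + n₁ + m * n₁) := by
    rcases le_total 0 α with hα | hα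
    · rw [show m = 0 from min_eq_right hα]
      have hα4 : α ^ 2 ≤ 4 := by nlinarith
      nlinarith [mul_le_mul_of_nonneg_right hα4 (mul_pos h₀ h₁).le, sq_nonneg (n₀ - n₁)]
    · rw [show m = α from min_eq_left hα]
      nlinarith [mul_pos h₀ h₁, sq_nonneg (n₀ + n₁)]
  set y₀ := Real.sqrt ((n₀ + n₁ + m * n₀) / n₀)
  have hy₀ : y₀ ^ 2 * n₀ = n₀ + n₁ + m * n₀ := by
    rw [Real.sq_sqrt (div_pos hc h₀).le, div_mul_cancel₀ _ h₀.ne']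
  have hy₀' : y₀ ≠ 0 := by intro h; rw [h] at hy₀; linarith
  refine ⟨y₀, α / y₀, Or.inl (mul_div_cancel₀ _ hy₀'), hy₀.le, ?_⟩
  rw [div_pow, div_mul_eq_mul_div, div_le_iff₀ (by positivity)]
  refine le_of_mul_le_mul_right ?_ h₀
  calc α ^ 2 * n₁ * n₀ = α ^ 2 * (n₀ * n₁) := by ring
    _ ≤ (n₀ + n₁ + m * n₀) * (n₀ + n₁ + m * n₁) := key
    _ = (n₀ + n₁ + m * n₁) * y₀ ^ 2 * n₀ := by rw [← hy₀]; ring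

def phaseTwirl (h : Fin 2 → κ → ℂ) : Matrix (Fin 2 × κ) (Fin 2 × κ) ℂ :=
  ([1, Complex.I, -1, -Complex.I].map fun φ : ℂ => vecMulVec ![1, φ] (star ![1, φ]) ⊗ₖ
    vecMulVec (h 0 + star φ • h 1) (star (h 0 + star φ • h 1))).sum

lemma phaseTwirl_apply (h : Fin 2 → κ → ℂ) (a b : Fin 2) (z w : κ) :
    phaseTwirl h (a, z) (b, w) =
      4 * if a = b then h 0 z * star (h 0 w) + h 1 z * star (h 1 w) else h a z * star (h b w) := by
  simp only [phaseTwirl, List.map_cons, List.map_nil, List.sum_cons, List.sum_nil, add_zero,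
    Matrix.add_apply, kronecker_apply, vecMulVec_apply, Pi.star_apply, Pi.add_apply,
    Pi.smul_apply, smul_eq_mul, star_add, star_mul', star_neg, Complex.star_def, Complex.conj_I]
  fin_cases a <;> fin_cases b <;>
    simp only [Fin.zero_eta, Fin.mk_one, cons_val_zero, cons_val_one, cons_val_fin_one, if_true,
      zero_ne_one, one_ne_zero, if_false, map_one, map_neg, Complex.conj_I] <;>
    ring_nf <;> simp only [Complex.I_sq, Complex.I_pow_four] <;> ring_nf

lemma phaseTwirl_mem_separableCone [Fintype κ] (h : Fin 2 → κ → ℂ) :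
    phaseTwirl h ∈ separableCone (Fin 2) κ :=
  list_sum_mem fun M hM => by
    obtain ⟨φ, -, rfl⟩ := List.mem_map.mp hM
    exact kronecker_mem_separableCone (posSemidef_vecMulVec_self_star _)
      (posSemidef_vecMulVec_self_star _)

lemma smul_one_add_smul_vecMulVec_eq_phaseTwirl_add [DecidableEq κ] (v : Fin 2 × κ → ℂ)
    (h : Fin 2 → κ → ℂ) (t : ℂ) (α : ℝ) (hoff : vecMulVec (h 0) (star (h 1)) =
      (α : ℂ) • vecMulVec (fun z => v (0, z)) (star fun z => v (1, z))) :
    t • (1 : Matrix (Fin 2 × κ) (Fin 2 × κ) ℂ) + (α : ℂ) • vecMulVec v (star v) =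
      (4⁻¹ : ℝ) • phaseTwirl h + ∑ a, vecMulVec (Pi.single a 1) (star (Pi.single a 1)) ⊗ₖ
        (t • 1 + (α : ℂ) • vecMulVec (fun z => v (a, z)) (star fun z => v (a, z)) -
          ∑ b, vecMulVec (h b) (star (h b))) := by
  ext ⟨a, z⟩ ⟨b, w⟩
  have hoff' : vecMulVec (h 1) (star (h 0)) =
      (α : ℂ) • vecMulVec (fun z => v (1, z)) (star fun z => v (0, z)) := by
    simpa [conjTranspose_vecMulVec, conjTranspose_smul] using congrArg conjTranspose hoff
  have h01 := congrFun (congrFun hoff z) w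
  have h10 := congrFun (congrFun hoff' z) w
  simp only [vecMulVec_apply, Pi.star_apply, Matrix.smul_apply, smul_eq_mul, Complex.star_def]
    at h01 h10
  simp only [Matrix.add_apply, Matrix.smul_apply, Matrix.sub_apply, phaseTwirl_apply,
    kronecker_apply, vecMulVec_apply, Pi.star_apply, Fin.sum_univ_two, one_apply, Pi.single_apply,
    Prod.mk.injEq, smul_eq_mul, Complex.real_smul]
  fin_cases a <;> fin_cases b <;> simp [h01, h10]

section qubit

variable [Fintype κ] [DecidableEq κ]

theorem reductionMap_vecMulVec_mem_separableCone_of_orthogonal (v : Fin 2 × κ → ℂ)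
    (horth : Pairwise fun a b => star (fun z => v (a, z)) ⬝ᵥ (fun z => v (b, z)) = 0) {α : ℝ}
    (hα₁ : -1 ≤ α) (hα₂ : α ≤ 2) :
    reductionMap α (vecMulVec v (star v)) ∈ separableCone (Fin 2) κ := by
  set g : Fin 2 → κ → ℂ := fun a z => v (a, z)
  set N : Fin 2 → ℝ := fun a => (star (g a) ⬝ᵥ g a).re
  have hN : ∀ a, 0 ≤ N a := fun a => (Complex.nonneg_iff.mp (dotProduct_star_self_nonneg (g a))).1
  have hg_zero : ∀ a, N a = 0 → g a = 0 := fun a ha => dotProduct_star_self_eq_zero.mp <| by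
    rw [← ofReal_re_star_dotProduct_self]; exact congrArg _ ha
  have htrace : (vecMulVec v (star v)).trace = ((N 0 + N 1 : ℝ) : ℂ) := by
    rw [trace_vecMulVec, Complex.ofReal_add, ofReal_re_star_dotProduct_self,
      ofReal_re_star_dotProduct_self]
    simp [g, dotProduct, Fintype.sum_prod_type, mul_comm]
  obtain ⟨y₀, y₁, hy, hy₀, hy₁⟩ := exists_mul_eq_and_sq_mul_le (hN 0) (hN 1) hα₁ hα₂
  set y : Fin 2 → ℝ := ![y₀, y₁]
  set h : Fin 2 → κ → ℂ := fun b => (y b : ℂ) • g b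
  have hoff : vecMulVec (h 0) (star (h 1)) = (α : ℂ) • vecMulVec (g 0) (star (g 1)) := by
    rcases hy with hy | hy | hy
    · change vecMulVec ((y₀ : ℂ) • g 0) (star ((y₁ : ℂ) • g 1)) = _
      rw [vecMulVec_ofReal_smul, hy]
    · simp [h, hg_zero 0 hy]
    · simp [h, hg_zero 1 hy]
  rw [reductionMap_apply, htrace, smul_one_add_smul_vecMulVec_eq_phaseTwirl_add v h _ α hoff]
  refine add_mem (PointedCone.smul_mem (r := 4⁻¹) _ (by norm_num) (phaseTwirl_mem_separableCone h))
    (Submodule.sum_mem _ fun a _ =>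
      kronecker_mem_separableCone (posSemidef_vecMulVec_self_star _) ?_)
  convert posSemidef_smul_one_add_sum_smul_vecMulVec horth (add_nonneg (hN 0) (hN 1))
    (fun b => (if a = b then α else 0) - y b ^ 2) (fun b => ?_) using 1
  · simp only [h, g, vecMulVec_ofReal_smul, Fin.sum_univ_two]
    fin_cases a <;> simp only [Fin.zero_eta, Fin.mk_one, if_pos] <;> push_cast <;> module
  · have hyb : y b ^ 2 * N b ≤ N 0 + N 1 + min α 0 * N b := by fin_cases b <;> assumption
    have := hN b
    split_ifs <;> nlinarith [min_le_left α 0, min_le_right α 0]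

theorem reductionMap_vecMulVec_mem_separableCone (v : Fin 2 × κ → ℂ) {α : ℝ} (hα₁ : -1 ≤ α)
    (hα₂ : α ≤ 2) : reductionMap α (vecMulVec v (star v)) ∈ separableCone (Fin 2) κ := by
  obtain ⟨U, hU, horth⟩ := exists_mem_unitaryGroup_pairwise_orthogonal_rows (of fun a z => v (a, z))
  set X : Matrix (Fin 2 × κ) (Fin 2 × κ) ℂ := U ⊗ₖ 1
  have hX : Xᴴ * X = 1 := by
    have hUU : Uᴴ * U = 1 := mem_unitaryGroup_iff'.mp hU
    rw [conjTranspose_kronecker, conjTranspose_one, ← mul_kronecker_mul, Matrix.one_mul, hUU,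
      one_kronecker_one]
  have hXv : ∀ a z, (X *ᵥ v) (a, z) = (U * of fun a z => v (a, z)) a z := by
    intro a z
    simp [X, mulVec, dotProduct, mul_apply, Fintype.sum_prod_type, one_apply]
  have hconj : X * vecMulVec v (star v) * Xᴴ = vecMulVec (X *ᵥ v) (star (X *ᵥ v)) := by
    rw [mul_vecMulVec, vecMulVec_mul, star_mulVec]
  rw [← conjTranspose_mul_reductionMap_mul α _ hX, hconj]
  refine conjTranspose_mul_mul_mem_separableCone
    (reductionMap_vecMulVec_mem_separableCone_of_orthogonal _ ?_ hα₁ hα₂) U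
  simpa only [hXv] using horth

theorem reductionMap_mem_separableCone {ρ : Matrix (Fin 2 × κ) (Fin 2 × κ) ℂ} (hρ : ρ.PosSemidef)
    {α : ℝ} (hα₁ : -1 ≤ α) (hα₂ : α ≤ 2) : reductionMap α ρ ∈ separableCone (Fin 2) κ := by
  obtain ⟨m, v, rfl⟩ := posSemidef_iff_eq_sum_vecMulVec.mp hρ
  rw [map_sum]
  exact Submodule.sum_mem _ fun t _ => reductionMap_vecMulVec_mem_separableCone (v t) hα₁ hα₂

end qubit

theorem stmt0_general (N : ℕ)
    (ρ : Matrix (Fin N → Fin 2) (Fin N → Fin 2) ℂ) (hρ : ρ.PosSemidef)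
    (α : ℝ) (hα1 : -1 ≤ α) (hα2 : α ≤ 2) (i : Fin N) :
    SepAcross {i}
      (ρ.trace • (1 : Matrix (Fin N → Fin 2) (Fin N → Fin 2) ℂ) + (α : ℂ) • ρ) := by
  let e : (Fin N → Fin 2) ≃ Fin 2 × ({j // j ∈ ({i} : Finset (Fin N))ᶜ} → Fin 2) :=
    (Equiv.funSplitAt i (Fin 2)).trans (Equiv.prodCongr (Equiv.refl _)
      (Equiv.arrowCongr (Equiv.subtypeEquivRight fun j => by simp) (Equiv.refl _)))
  have hM := reductionMap_mem_separableCone (hρ.submatrix e.symm) hα1 hα2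
  rw [reductionMap_submatrix] at hM
  have he : ∀ x, e.symm (x i, fun j => x j) = x := e.symm_apply_apply
  exact sepAcross_of_mem_separableCone (fun f => f ⟨i, Finset.mem_singleton_self i⟩) hM
    fun x y => by simp [reductionMap_apply, he]

/-- Reduction map sends every PSD `N`-qubit operator to a state biseparable across
every `1:(N-1)` bipartition, for `-1 ≤ α ≤ 2`. -/
theorem stmt0 (N : ℕ) (hN : 2 ≤ N)
    (ρ : Matrix (Fin N → Fin 2) (Fin N → Fin 2) ℂ) (hρ : ρ.PosSemidef)
    (α : ℝ) (hα1 : -1 ≤ α) (hα2 : α ≤ 2) (i : Fin N) :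
    SepAcross {i}
      (ρ.trace • (1 : Matrix (Fin N → Fin 2) (Fin N → Fin 2) ℂ) + (α : ℂ) • ρ) :=
  stmt0_general N ρ hρ α hα1 hα2 i
end
end

section
/- Let N = 3 and let 𝟙_S be the projector onto the symmetric subspace of three qubits. The partial transpose (𝟙_S)^{T_{{0}}} with respect to qubit 0 is a positive semidefinite 8×8 matrix whose eigenvalues are 0 with multiplicity 2, 1/3 with multiplicity 4, and 4/3 with multiplicity 2; equivalently, its characteristic polynomial is x²·(x − 1/3)⁴·(x − 4/3)². -/
open scoped ComplexOrder

noncomputable section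

/-! `symProj 3 x y` only depends on whether `x` and `y` have the same weight, so
`pt {0} (symProj 3) x y` vanishes unless `x₁ + x₂ - x₀ = y₁ + y₂ - y₀`. Ordering the basis by
this quantity makes the matrix block diagonal: two copies of `symBlock`, with eigenvalues
`0, 1/3, 4/3`, and the scalar `1/3` on the remaining two basis vectors. Positivity then follows
from the spectrum, since partial transposition preserves hermiticity. -/

open Matrix Polynomial

def weight {N : ℕ} (x : Fin N → Fin 2) : ℕ := (Finset.univ.filter fun i => x i = 1).card

lemma weight_le {N : ℕ} (x : Fin N → Fin 2) : weight x ≤ N :=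
  (Finset.card_filter_le _ _).trans_eq (Finset.card_fin N)

lemma weight_eq_sum {N : ℕ} (x : Fin N → Fin 2) : weight x = ∑ i, (x i : ℕ) := by
  rw [weight, Finset.card_filter]
  exact Finset.sum_congr rfl fun i _ =>
    (by decide : ∀ a : Fin 2, (if a = 1 then 1 else 0) = (a : ℕ)) (x i)

lemma dicke_mul_star_dicke (N k : ℕ) (x y : Fin N → Fin 2) :
    dicke N k x * star (dicke N k y) =
      if weight x = k ∧ weight y = k then (N.choose k : ℂ)⁻¹ else 0 := by
  have hsq :
      ((√(N.choose k) : ℝ) : ℂ)⁻¹ * ((√(N.choose k) : ℝ) : ℂ)⁻¹ = (N.choose k : ℂ)⁻¹ := by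
    rw [← mul_inv, ← Complex.ofReal_mul, Real.mul_self_sqrt (Nat.cast_nonneg _),
      Complex.ofReal_natCast]
  unfold dicke
  split_ifs <;> simp_all [weight]

lemma symProj_apply (N : ℕ) (x y : Fin N → Fin 2) :
    symProj N x y = if weight x = weight y then (N.choose (weight x) : ℂ)⁻¹ else 0 := by
  simp only [symProj, dicke_mul_star_dicke]
  split_ifs with h
  · rw [Finset.sum_eq_single_of_mem (weight x) (Finset.mem_range_succ_iff.mpr (weight_le x))]
    · simp [h]
    · intro k _ hk; simp [Ne.symm hk]
  · exact Finset.sum_eq_zero fun k _ => if_neg fun hk => h (hk.1.trans hk.2.symm)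

lemma pt_conjTranspose {N : ℕ} (X : Finset (Fin N))
    (σ : Matrix (Fin N → Fin 2) (Fin N → Fin 2) ℂ) : (pt X σ)ᴴ = pt X σᴴ := rfl

lemma Matrix.IsHermitian.pt {N : ℕ} {σ : Matrix (Fin N → Fin 2) (Fin N → Fin 2) ℂ}
    (hσ : σ.IsHermitian) (X : Finset (Fin N)) : (pt X σ).IsHermitian := by
  rw [IsHermitian, pt_conjTranspose, hσ.eq]

lemma symProj_isHermitian (N : ℕ) : (symProj N).IsHermitian := by
  ext x y
  simp only [conjTranspose_apply, symProj_apply, eq_comm (a := weight y)]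
  split_ifs with h <;> simp [h]

theorem Matrix.IsHermitian.posSemidef_of_forall_mem_roots_charpoly_nonneg {n 𝕜 : Type*}
    [Fintype n] [DecidableEq n] [RCLike 𝕜] {A : Matrix n n 𝕜} (hA : A.IsHermitian)
    (h : ∀ μ ∈ A.charpoly.roots, 0 ≤ μ) : A.PosSemidef := by
  refine hA.posSemidef_iff_eigenvalues_nonneg.mpr fun i => ?_
  have hroot : (hA.eigenvalues i : 𝕜) ∈ A.charpoly.roots :=
    hA.roots_charpoly_eq_eigenvalues ▸ Multiset.mem_map_of_mem _ (Finset.mem_univ_val i)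
  exact RCLike.ofReal_nonneg.mp (h _ hroot)

def blockIndex : Fin 3 ⊕ Fin 3 ⊕ Fin 2 → (Fin 3 → Fin 2) :=
  Sum.elim ![![0, 0, 0], ![1, 0, 1], ![1, 1, 0]]
    (Sum.elim ![![1, 1, 1], ![0, 0, 1], ![0, 1, 0]] ![![1, 0, 0], ![0, 1, 1]])

lemma blockIndex_bijective : Function.Bijective blockIndex := by decide

def blockEquiv : Fin 3 ⊕ Fin 3 ⊕ Fin 2 ≃ (Fin 3 → Fin 2) :=
  Equiv.ofBijective _ blockIndex_bijective

def symBlock : Matrix (Fin 3) (Fin 3) ℂ := !![1, 1/3, 1/3; 1/3, 1/3, 1/3; 1/3, 1/3, 1/3]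

lemma submatrix_pt_symProj_three :
    (pt {0} (symProj 3)).submatrix blockEquiv blockEquiv =
      fromBlocks symBlock 0 0 (fromBlocks symBlock 0 0 (scalar (Fin 2) (1/3 : ℂ))) := by
  ext (i | i | i) (j | j | j) <;> fin_cases i <;> fin_cases j <;>
    simp [pt, symProj_apply, blockEquiv, blockIndex, symBlock, weight_eq_sum, Fin.sum_univ_three]

lemma charpoly_symBlock : symBlock.charpoly = X * (X - C (1/3 : ℂ)) * (X - C (4/3 : ℂ)) := by
  refine Polynomial.funext fun t => ?_
  rw [charpoly, det_fin_three]
  simp [symBlock]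
  ring

lemma charpoly_scalar_fin_two (c : ℂ) : (scalar (Fin 2) c).charpoly = (X - C c) ^ 2 := by
  rw [scalar_apply, charpoly_diagonal, Finset.prod_const, Finset.card_univ, Fintype.card_fin]

open Polynomial in
/-- The partial transpose of the symmetric projector of three qubits is PSD with
eigenvalues `0, 0, 1/3, 1/3, 1/3, 1/3, 4/3, 4/3`. -/
theorem stmt5 :
    (pt {0} (symProj 3)).PosSemidef ∧
    (pt {0} (symProj 3)).charpoly =
      X ^ 2 * (X - C (1 / 3 : ℂ)) ^ 4 * (X - C (4 / 3 : ℂ)) ^ 2 := by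
  have hcharpoly : (pt {0} (symProj 3)).charpoly =
      X ^ 2 * (X - C (1 / 3 : ℂ)) ^ 4 * (X - C (4 / 3 : ℂ)) ^ 2 := by
    rw [← charpoly_reindex blockEquiv.symm, reindex_apply, Equiv.symm_symm,
      submatrix_pt_symProj_three, charpoly_fromBlocks_zero₁₂, charpoly_fromBlocks_zero₁₂,
      charpoly_symBlock, charpoly_scalar_fin_two]
    ring
  refine ⟨(symProj_isHermitian 3).pt {0} |>.posSemidef_of_forall_mem_roots_charpoly_nonneg ?_,
    hcharpoly⟩
  intro μ hμ
  have hspec : μ = 0 ∨ μ = 1 / 3 ∨ μ = 4 / 3 := by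
    simpa [hcharpoly, roots_mul, X_sub_C_ne_zero, or_assoc] using hμ
  rcases hspec with rfl | rfl | rfl <;> positivity
end
end

section
/- Let N ≥ 2 and let ρ_DS = Σ_{k=0}^N p_k |S_k^N⟩⟨S_k^N| be a diagonal symmetric N-qubit state (p_k ≥ 0, Σ_k p_k = 1). Let X = {0, 1, …, ⌊N/2⌋ − 1} ⊆ Fin N. Then the partial transpose (ρ_DS)^{T_X} is positive semidefinite if and only if both Hankel matrices M_0(p) and M_1(p) are positive semidefinite. -/
open scoped ComplexOrder

noncomputable section

/-!
Write `a x` and `b x` for the numbers of ones of `x` in `X` and in `Xᶜ`. The entry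
`(ρ_DS)^{T_X}(x, y)` vanishes unless `a x - b x = a y - b y`, and then equals `p_k / (N choose k)`
with `k = a y + b x = (|x| + |y|) / 2`. So the partial transpose is block diagonal over the values
of `a - b`, and on each block, indexing `x` by `⌊|x| / 2⌋`, its entries are those of `M_l(p)`
with `l` the parity of `|x|`: positivity of `M_0(p)` and `M_1(p)` gives positivity of the
partial transpose. Conversely, when `|X| = ⌊N/2⌋`, bitstrings with `(a, b) = (i, i + l)` for
`0 ≤ i ≤ n_l` exist and span a principal submatrix equal to `M_l(p)`.
-/

open Matrix Finset

theorem Matrix.posSemidef_map_ofReal_iff {n : Type*} [Fintype n] {A : Matrix n n ℝ} :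
    (A.map ((↑) : ℝ → ℂ)).PosSemidef ↔ A.PosSemidef := by
  refine ⟨fun h => .of_dotProduct_mulVec_nonneg ?_ fun u => ?_, fun h => ?_⟩
  · exact (isHermitian_map_iff (fun r => (Complex.conj_ofReal r).symm)
      Complex.ofReal_injective).mp h.1
  · have := h.dotProduct_mulVec_nonneg (Complex.ofRealHom ∘ u)
    have hstar : star (Complex.ofRealHom ∘ u) = Complex.ofRealHom ∘ u :=
      funext fun i => Complex.conj_ofReal (u i)
    have hmulVec : A.map (↑) *ᵥ (Complex.ofRealHom ∘ u) = Complex.ofRealHom ∘ (A *ᵥ u) :=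
      funext fun i => (RingHom.map_mulVec Complex.ofRealHom A u i).symm
    rw [hstar, hmulVec, ← RingHom.map_dotProduct] at this
    exact Complex.zero_le_real.mp this
  · classical
    obtain ⟨B, rfl⟩ : ∃ B : Matrix n n ℝ, A = Bᴴ * B := by
      open scoped MatrixOrder in exact CStarAlgebra.nonneg_iff_eq_star_mul_self.mp h.nonneg
    rw [show ((↑) : ℝ → ℂ) = Complex.ofRealHom from rfl, Matrix.map_mul,
      conjTranspose_map (⇑Complex.ofRealHom) fun r => (Complex.conj_ofReal r).symm]
    exact posSemidef_conjTranspose_mul_self _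

theorem Matrix.PosSemidef.of_apply_eq_ite {ι κ α R : Type*} [Fintype ι] [DecidableEq κ]
    [CommRing R] [PartialOrder R] [StarRing R] [StarOrderedRing R]
    {M : Matrix ι ι R} (c : ι → κ) (g : ι → α) (B : κ → Matrix α α R)
    (hB : ∀ x, (B (c x)).PosSemidef)
    (hM : ∀ x y, M x y = if c x = c y then B (c x) (g x) (g y) else 0) : M.PosSemidef := by
  classical
  let D : κ → Matrix ι ι R := fun k => diagonal fun x => if c x = k then 1 else 0
  have hblocks : M = ∑ k ∈ univ.image c, (D k)ᴴ * (B k).submatrix g g * D k := by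
    ext x y
    rw [hM, sum_apply, sum_eq_single (c x)]
    · by_cases h : c x = c y <;> simp [D, h, eq_comm]
    · intro k _ hk
      simp [D, Ne.symm hk]
    · simp
  rw [hblocks]
  refine posSemidef_sum _ fun k hk => ?_
  obtain ⟨x, -, rfl⟩ := mem_image.mp hk
  exact ((hB x).submatrix g).conjTranspose_mul_mul_same _

section Qubits

variable {N : ℕ}

def onesIn (s : Finset (Fin N)) (x : Fin N → Fin 2) : ℕ := #{i ∈ s | x i = 1}

lemma onesIn_le_card (s : Finset (Fin N)) (x : Fin N → Fin 2) : onesIn s x ≤ #s :=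
  card_filter_le _ _

lemma onesIn_univ_eq_add (X : Finset (Fin N)) (x : Fin N → Fin 2) :
    onesIn univ x = onesIn X x + onesIn Xᶜ x := by
  simp only [onesIn, card_filter, sum_add_sum_compl]

lemma onesIn_piecewise_left (X : Finset (Fin N)) (x y : Fin N → Fin 2) :
    onesIn X (fun i => if i ∈ X then y i else x i) = onesIn X y := by
  unfold onesIn
  congr 1
  exact filter_congr fun i hi => by simp [hi]

lemma onesIn_piecewise_right (X : Finset (Fin N)) (x y : Fin N → Fin 2) :
    onesIn Xᶜ (fun i => if i ∈ X then y i else x i) = onesIn Xᶜ x := by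
  unfold onesIn
  congr 1
  exact filter_congr fun i hi => by simp [mem_compl.mp hi]

lemma exists_onesIn_eq (X : Finset (Fin N)) {a b : ℕ} (ha : a ≤ #X) (hb : b ≤ #Xᶜ) :
    ∃ x : Fin N → Fin 2, onesIn X x = a ∧ onesIn Xᶜ x = b := by
  obtain ⟨S, hSX, rfl⟩ := exists_subset_card_eq ha
  obtain ⟨T, hTX, rfl⟩ := exists_subset_card_eq hb
  refine ⟨fun i => if i ∈ S ∪ T then 1 else 0, ?_, ?_⟩
  all_goals
    unfold onesIn
    congr 1
    ext i
    have := @hSX i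
    have := @hTX i
    simp only [mem_filter, mem_union, mem_compl, ite_eq_left_iff] at *
    grind

lemma dicke_apply (k : ℕ) (x : Fin N → Fin 2) :
    dicke N k x = if onesIn univ x = k then (((N.choose k : ℝ).sqrt⁻¹ : ℝ) : ℂ) else 0 := rfl

lemma rhoDS_apply (p : ℕ → ℝ) (x y : Fin N → Fin 2) :
    rhoDS N p x y = if onesIn univ x = onesIn univ y
      then ((p (onesIn univ x) / N.choose (onesIn univ x) : ℝ) : ℂ) else 0 := by
  have hx : onesIn univ x ∈ range (N + 1) := by
    simpa [Nat.lt_succ_iff] using onesIn_le_card univ x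
  rw [rhoDS, sum_eq_single_of_mem _ hx fun k _ hk => by simp [dicke_apply, Ne.symm hk]]
  simp only [dicke_apply, if_true]
  by_cases h : onesIn univ x = onesIn univ y
  · rw [if_pos h.symm, if_pos h, Complex.star_def, Complex.conj_ofReal, mul_assoc,
      ← Complex.ofReal_mul, ← Complex.ofReal_mul, ← mul_inv,
      Real.mul_self_sqrt (Nat.cast_nonneg _), div_eq_mul_inv]
  · simp [Ne.symm h, h]

lemma pt_rhoDS_apply (X : Finset (Fin N)) (p : ℕ → ℝ) (x y : Fin N → Fin 2) :
    pt X (rhoDS N p) x y =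
      if onesIn X y + onesIn Xᶜ x = onesIn X x + onesIn Xᶜ y
      then ((p (onesIn X y + onesIn Xᶜ x) / N.choose (onesIn X y + onesIn Xᶜ x) : ℝ) : ℂ)
      else 0 := by
  rw [pt, rhoDS_apply, onesIn_univ_eq_add X, onesIn_univ_eq_add X, onesIn_piecewise_left,
    onesIn_piecewise_right, onesIn_piecewise_left, onesIn_piecewise_right]

lemma onesIn_add_onesIn_compl_le (X : Finset (Fin N)) (x : Fin N → Fin 2) :
    onesIn X x + onesIn Xᶜ x ≤ N := by
  simpa [← onesIn_univ_eq_add] using onesIn_le_card univ x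

theorem posSemidef_pt_rhoDS_of_hankel (X : Finset (Fin N)) {p : ℕ → ℝ}
    (h0 : (hankel N 0 p).PosSemidef) (h1 : (hankel N 1 p).PosSemidef) :
    (pt X (rhoDS N p)).PosSemidef := by
  -- `Fin.clamp` only re-indexes `M_l(p)` by `ℕ`: the indices `⌊|x| / 2⌋` used below are in range.
  let H : ℕ → Matrix ℕ ℕ ℂ := fun l =>
    ((hankel N l p).map (↑)).submatrix (Fin.clamp · _) (Fin.clamp · _)
  refine PosSemidef.of_apply_eq_ite
    (fun x => ((onesIn X x : ℤ) - onesIn Xᶜ x, (onesIn X x + onesIn Xᶜ x) % 2))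
    (fun x => (onesIn X x + onesIn Xᶜ x) / 2) (fun k => H k.2) (fun x => ?_) (fun x y => ?_)
  · rcases Nat.mod_two_eq_zero_or_one (onesIn X x + onesIn Xᶜ x) with h | h <;> simp only [h]
    · exact (posSemidef_map_ofReal_iff.2 h0).submatrix _
    · exact (posSemidef_map_ofReal_iff.2 h1).submatrix _
  · have hx := onesIn_add_onesIn_compl_le X x
    have hy := onesIn_add_onesIn_compl_le X y
    rw [pt_rhoDS_apply]
    simp only [H, submatrix_apply, map_apply, hankel, Fin.clamp, Prod.mk.injEq]
    set a₁ := onesIn X x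
    set b₁ := onesIn Xᶜ x
    set a₂ := onesIn X y
    set b₂ := onesIn Xᶜ y
    by_cases h : a₂ + b₁ = a₁ + b₂
    · have hidx : min ((a₁ + b₁) / 2) ((N - (a₁ + b₁) % 2) / 2)
          + min ((a₂ + b₂) / 2) ((N - (a₁ + b₁) % 2) / 2) + (a₁ + b₁) % 2 = a₂ + b₁ := by
        omega
      rw [if_pos h, if_pos (by omega), hidx]
    · rw [if_neg h, if_neg (by omega)]

theorem posSemidef_hankel_of_pt_rhoDS {X : Finset (Fin N)} (hX : #X = N / 2) {l : ℕ}
    (hl : l ≤ 1) (hlN : l ≤ N) {p : ℕ → ℝ} (h : (pt X (rhoDS N p)).PosSemidef) :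
    (hankel N l p).PosSemidef := by
  have hXc : #Xᶜ = N - N / 2 := by rw [card_compl, Fintype.card_fin, hX]
  have hrep (i : Fin ((N - l) / 2 + 1)) : ∃ x, onesIn X x = i ∧ onesIn Xᶜ x = i + l :=
    exists_onesIn_eq X (by omega) (by omega)
  choose rep hrepX hrepXc using hrep
  rw [← posSemidef_map_ofReal_iff]
  convert h.submatrix rep using 1
  ext i j
  rw [submatrix_apply, pt_rhoDS_apply, hrepX, hrepX, hrepXc, hrepXc, if_pos (by omega),
    map_apply, hankel, show (j : ℕ) + (i + l) = i + j + l by omega]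

end Qubits

theorem stmt7_general (N : ℕ) (hN : 2 ≤ N) (p : ℕ → ℝ) :
    (pt (Finset.univ.filter (fun i : Fin N => (i : ℕ) < N / 2)) (rhoDS N p)).PosSemidef ↔
      (hankel N 0 p).PosSemidef ∧ (hankel N 1 p).PosSemidef := by
  have hX : #(univ.filter fun i : Fin N => (i : ℕ) < N / 2) = N / 2 := by
    rw [Fin.card_filter_val_lt]; omega
  exact ⟨fun h => ⟨posSemidef_hankel_of_pt_rhoDS hX zero_le_one (Nat.zero_le N) h,
    posSemidef_hankel_of_pt_rhoDS hX le_rfl (by omega) h⟩,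
    fun h => posSemidef_pt_rhoDS_of_hankel _ h.1 h.2⟩

/-- PPT of a diagonal symmetric state across the half-half bipartition is equivalent
to positive semidefiniteness of the two Hankel matrices `M₀(p)` and `M₁(p)`. -/
theorem stmt7 (N : ℕ) (hN : 2 ≤ N) (p : ℕ → ℝ) (hp : ∀ k ≤ N, 0 ≤ p k)
    (hsum : ∑ k ∈ Finset.range (N + 1), p k = 1) :
    (pt (Finset.univ.filter (fun i : Fin N => (i : ℕ) < N / 2)) (rhoDS N p)).PosSemidef ↔
      (hankel N 0 p).PosSemidef ∧ (hankel N 1 p).PosSemidef :=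
  stmt7_general N hN p
end
end

section
/- Let N ≥ 2 and let σ be a positive semidefinite N-qubit operator that is invariant under partial transposition of qubit 0, i.e. σ^{T_{{0}}} = σ. Then σ is biseparable across the 1:(N−1) bipartition at qubit 0. -/
open scoped ComplexOrder

noncomputable section

/-!
Write `σ` in blocks with respect to qubit `0`, `σ = [[A, B], [B', C]]`. Invariance under the
partial transpose of that qubit says `B' = B`, and hermiticity of `σ` then makes `B` Hermitian.
Let `R = C^{1/2}`, let `G` be its pseudo-inverse, and diagonalise the Hermitian matrix
`T = G B G = Σ λᵢ vᵢ vᵢ*`. The positive matrices `Eᵢ = R vᵢ vᵢ* R` satisfy `Σ Eᵢ = C`,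
`Σ λᵢ Eᵢ = B` and `Σ λᵢ² Eᵢ = B C⁺ B`, so that
`σ = |0⟩⟨0| ⊗ (A - B C⁺ B) + Σᵢ (λᵢ, 1)(λᵢ, 1)* ⊗ Eᵢ`,
where the Schur complement `A - B C⁺ B` is positive. Since `C` may be singular, the one point
needing care is that `σ ≥ 0` forces `ker C ⊆ ker B`, so that `B` is fixed by the support
projection `G R` of `C`.
-/

namespace Matrix

variable {𝕜 m n : Type*} [RCLike 𝕜] [Fintype m] [Fintype n]

namespace PosSemidef

variable {A : Matrix m m 𝕜} {B : Matrix m n 𝕜} {B' : Matrix n m 𝕜} {C : Matrix n n 𝕜}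

lemma mulVec_eq_zero_of_fromBlocks (hM : (fromBlocks A B B' C).PosSemidef) {v : n → 𝕜}
    (hv : C *ᵥ v = 0) : B *ᵥ v = 0 := by
  have hMv : fromBlocks A B B' C *ᵥ Sum.elim 0 v = Sum.elim (B *ᵥ v) 0 := by
    simp [fromBlocks_mulVec, hv]
  have hzero := (hM.dotProduct_mulVec_zero_iff (Sum.elim 0 v)).mp
    (by simp [hMv, dotProduct, Fintype.sum_sum_type])
  rw [hMv] at hzero
  exact funext fun i => congrFun hzero (Sum.inl i)

lemma mul_eq_zero_of_fromBlocks {l : Type*} (hM : (fromBlocks A B B' C).PosSemidef)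
    {X : Matrix n l 𝕜} (hX : C * X = 0) : B * X = 0 := by
  ext i j
  have hcol := hM.mulVec_eq_zero_of_fromBlocks (v := fun k => X k j)
    (funext fun k => by simpa [mulVec, dotProduct, mul_apply] using congrFun (congrFun hX k) j)
  simpa [mulVec, dotProduct, mul_apply] using congrFun hcol i

lemma sub_mul_mul_conjTranspose_of_fromBlocks (hM : (fromBlocks A B Bᴴ C).PosSemidef)
    {D : Matrix n n 𝕜} (hD : D.IsHermitian) (hDCD : D * C * D = D) :
    (A - B * D * Bᴴ).PosSemidef := by
  classical
  have hconj := hM.conjTranspose_mul_mul_same (fromRows 1 (-(D * Bᴴ)))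
  convert hconj using 1
  rw [conjTranspose_fromRows_eq_fromCols_conjTranspose, Matrix.mul_assoc _ (fromBlocks _ _ _ _),
    fromBlocks_mul_fromRows, fromCols_mul_fromRows]
  simp only [conjTranspose_one, conjTranspose_neg, conjTranspose_mul, conjTranspose_conjTranspose,
    hD.eq]
  calc A - B * D * Bᴴ = A - B * D * Bᴴ - B * D * Bᴴ + B * (D * C * D) * Bᴴ := by
        rw [hDCD]; abel
    _ = _ := by
        simp only [Matrix.mul_neg, Matrix.neg_mul, Matrix.one_mul, Matrix.mul_one,
          Matrix.mul_assoc, Matrix.mul_add]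
        abel

end PosSemidef

variable [DecidableEq m]

namespace IsHermitian

variable {A : Matrix m m 𝕜} (hA : A.IsHermitian)
include hA

lemma cfc_mul_cfc (f g : ℝ → ℝ) : hA.cfc f * hA.cfc g = hA.cfc fun t => f t * g t := by
  simp only [IsHermitian.cfc, ← map_mul, diagonal_mul_diagonal]
  simp [Function.comp_def]

lemma cfc_congr_eigenvalues {f g : ℝ → ℝ}
    (h : ∀ i, f (hA.eigenvalues i) = g (hA.eigenvalues i)) : hA.cfc f = hA.cfc g := by
  simp only [IsHermitian.cfc, Function.comp_def, h]

lemma cfc_id : hA.cfc id = A := hA.spectral_theorem.symm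

lemma cfc_one : hA.cfc (fun _ => 1) = 1 := by
  simp [IsHermitian.cfc, Function.comp_def]

lemma isHermitian_cfc (f : ℝ → ℝ) : (hA.cfc f).IsHermitian := by
  rw [← hA.cfc_eq]
  exact cfc_predicate f A

lemma cfc_eq_sum_vecMulVec (f : ℝ → ℝ) :
    hA.cfc f = ∑ i, (f (hA.eigenvalues i) : 𝕜) •
      vecMulVec (hA.eigenvectorBasis i) (star (hA.eigenvectorBasis i)) := by
  ext j k
  rw [IsHermitian.cfc, Unitary.conjStarAlgAut_apply, mul_apply, Matrix.sum_apply]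
  refine Finset.sum_congr rfl fun i _ => ?_
  simp only [mul_diagonal, smul_apply, vecMulVec_apply, star_apply, eigenvectorUnitary_apply,
    Function.comp_apply, smul_eq_mul, Pi.star_apply]
  ring

lemma cfc_inv_mul_mul_cfc_inv : hA.cfc (·⁻¹) * A * hA.cfc (·⁻¹) = hA.cfc (·⁻¹) := by
  calc hA.cfc (·⁻¹) * A * hA.cfc (·⁻¹) = hA.cfc (·⁻¹) * hA.cfc id * hA.cfc (·⁻¹) := by
        rw [hA.cfc_id]
    _ = hA.cfc (·⁻¹) := by
        rw [hA.cfc_mul_cfc, hA.cfc_mul_cfc]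
        exact hA.cfc_congr_eigenvalues fun i => by
          simpa using mul_inv_mul_cancel (hA.eigenvalues i)⁻¹

end IsHermitian

lemma PosSemidef.cfc_sqrt_mul_cfc_sqrt {C : Matrix m m 𝕜} (hC : C.PosSemidef) :
    hC.isHermitian.cfc Real.sqrt * hC.isHermitian.cfc Real.sqrt = C := by
  rw [IsHermitian.cfc_mul_cfc]
  exact (hC.isHermitian.cfc_congr_eigenvalues fun i =>
    Real.mul_self_sqrt (hC.eigenvalues_nonneg i)).trans hC.isHermitian.cfc_id

lemma IsHermitian.sum_smul_vecMulVec_mulVec {R T : Matrix m m 𝕜} (hR : R.IsHermitian)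
    (hT : T.IsHermitian) (f : ℝ → ℝ) :
    ∑ i, (f (hT.eigenvalues i) : 𝕜) • vecMulVec (R *ᵥ hT.eigenvectorBasis i)
      (star (R *ᵥ hT.eigenvectorBasis i)) = R * hT.cfc f * R := by
  simp only [hT.cfc_eq_sum_vecMulVec, Matrix.mul_sum, Matrix.sum_mul, mul_smul_comm,
    smul_mul_assoc, mul_vecMulVec, vecMulVec_mul, star_mulVec, hR.eq]

lemma PosSemidef.mul_cfc_eq_of_fromBlocks {A : Matrix n n 𝕜} {B : Matrix n m 𝕜}
    {B' : Matrix m n 𝕜} {C : Matrix m m 𝕜} (hM : (fromBlocks A B B' C).PosSemidef)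
    (hC : C.IsHermitian) {f : ℝ → ℝ} (hf : ∀ i, hC.eigenvalues i ≠ 0 → f (hC.eigenvalues i) = 1) :
    B * hC.cfc f = B := by
  have hCf : C * hC.cfc f = C := calc
    C * hC.cfc f = hC.cfc id * hC.cfc f := by rw [hC.cfc_id]
    _ = hC.cfc id := by
      rw [hC.cfc_mul_cfc]
      refine hC.cfc_congr_eigenvalues fun i => ?_
      by_cases h : hC.eigenvalues i = 0 <;> simp [h, hf]
    _ = C := hC.cfc_id
  have hzero : B * (1 - hC.cfc f) = 0 :=
    hM.mul_eq_zero_of_fromBlocks (by rw [Matrix.mul_sub, hCf, Matrix.mul_one, sub_self])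
  rwa [Matrix.mul_sub, Matrix.mul_one, sub_eq_zero, eq_comm] at hzero

theorem PosSemidef.exists_spectral_family_of_fromBlocks {A B C : Matrix m m 𝕜}
    (hM : (fromBlocks A B B C).PosSemidef) (hB : B.IsHermitian) :
    ∃ (μ : m → ℝ) (E : m → Matrix m m 𝕜), (∀ i, (E i).PosSemidef) ∧ ∑ i, E i = C ∧
      ∑ i, (μ i : 𝕜) • E i = B ∧ (A - ∑ i, ((μ i : 𝕜) * μ i) • E i).PosSemidef := by
  have hC : C.PosSemidef := hM.submatrix Sum.inr
  have hCH := hC.isHermitian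
  have hC0 := hC.eigenvalues_nonneg
  set R := hCH.cfc Real.sqrt
  -- a pseudo-inverse of `R`, since `√0 = 0` and `0⁻¹ = 0`
  set G := hCH.cfc fun t => (√t)⁻¹
  set P := hCH.cfc fun t => (√t)⁻¹ * √t
  set D := hCH.cfc fun t => t⁻¹
  have hRR : R * R = C := hC.cfc_sqrt_mul_cfc_sqrt
  have hGR : G * R = P := hCH.cfc_mul_cfc _ _
  have hRG : R * G = P := by
    rw [hCH.cfc_mul_cfc]
    exact hCH.cfc_congr_eigenvalues fun i => mul_comm _ _
  have hGG : G * G = D := by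
    rw [hCH.cfc_mul_cfc]
    exact hCH.cfc_congr_eigenvalues fun i => by rw [← mul_inv, Real.mul_self_sqrt (hC0 i)]
  have hDCD : D * C * D = D := hCH.cfc_inv_mul_mul_cfc_inv
  have hBP : B * P = B := hM.mul_cfc_eq_of_fromBlocks hCH fun i hi =>
    inv_mul_cancel₀ (Real.sqrt_ne_zero'.mpr (lt_of_le_of_ne (hC0 i) (Ne.symm hi)))
  have hGH : G.IsHermitian := hCH.isHermitian_cfc _
  have hPH : P.IsHermitian := hCH.isHermitian_cfc _
  have hRH : R.IsHermitian := hCH.isHermitian_cfc _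
  have hDH : D.IsHermitian := hCH.isHermitian_cfc _
  have hPB : P * B = B := by
    simpa [hB.eq, hPH.eq] using congrArg (·ᴴ) hBP
  have hSchur : (A - B * D * B).PosSemidef := by
    have hM' : (fromBlocks A B Bᴴ C).PosSemidef := by rwa [hB.eq]
    simpa [hB.eq] using hM'.sub_mul_mul_conjTranspose_of_fromBlocks hDH hDCD
  have hT : (G * B * G).IsHermitian := by
    simp [IsHermitian, conjTranspose_mul, hB.eq, hGH.eq, Matrix.mul_assoc]
  have hsum := hRH.sum_smul_vecMulVec_mulVec hT
  refine ⟨hT.eigenvalues, fun i => vecMulVec (R *ᵥ hT.eigenvectorBasis i)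
    (star (R *ᵥ hT.eigenvectorBasis i)), fun i => posSemidef_vecMulVec_self_star _, ?_, ?_, ?_⟩
  · simpa [hT.cfc_one, hRR] using hsum fun _ => 1
  · calc _ = R * (G * B * G) * R := by simpa [hT.cfc_id] using hsum id
      _ = (R * G) * B * (G * R) := by simp only [Matrix.mul_assoc]
      _ = B := by rw [hRG, hGR, hPB, hBP]
  · convert hSchur using 2
    calc _ = R * (hT.cfc id * hT.cfc id) * R := by rw [hT.cfc_mul_cfc, ← hsum]; simp
      _ = R * (G * B * G) * (G * B * G) * R := by rw [hT.cfc_id, ← Matrix.mul_assoc R]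
      _ = (R * G) * B * (G * G) * B * (G * R) := by simp only [Matrix.mul_assoc]
      _ = B * D * B := by rw [hRG, hGR, hGG, hPB, Matrix.mul_assoc, hBP, Matrix.mul_assoc]

theorem PosSemidef.exists_sum_mul_of_swap_eq {M : Matrix (Fin 2 × m) (Fin 2 × m) 𝕜}
    (hM : M.PosSemidef) (hswap : ∀ a b f g, M (a, f) (b, g) = M (b, f) (a, g)) :
    ∃ (K : ℕ) (Q : Fin K → Matrix (Fin 2) (Fin 2) 𝕜) (E : Fin K → Matrix m m 𝕜),
      (∀ k, (Q k).PosSemidef) ∧ (∀ k, (E k).PosSemidef) ∧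
      ∀ a b f g, M (a, f) (b, g) = ∑ k, Q k a b * E k f g := by
  set blk : Fin 2 → Fin 2 → Matrix m m 𝕜 := fun a b => M.submatrix (a, ·) (b, ·)
  have hB : (blk 0 1).IsHermitian := by
    ext f g
    simpa [blk, hswap 1 0] using hM.isHermitian.apply (1, f) (0, g)
  have hblocks : (fromBlocks (blk 0 0) (blk 0 1) (blk 0 1) (blk 1 1)).PosSemidef := by
    convert hM.submatrix (Sum.elim (0, ·) (1, ·))
    ext (f | f) (g | g) <;> simp [blk, hswap 1 0]
  obtain ⟨μ, E, hE, hsum_one, hsum_μ, hrest⟩ := hblocks.exists_spectral_family_of_fromBlocks hB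
  let Q : Option m → Matrix (Fin 2) (Fin 2) 𝕜
    | none => vecMulVec ![1, 0] (star ![1, 0])
    | some i => vecMulVec ![(μ i : 𝕜), 1] (star ![(μ i : 𝕜), 1])
  let E' : Option m → Matrix m m 𝕜
    | none => blk 0 0 - ∑ i, ((μ i : 𝕜) * μ i) • E i
    | some i => E i
  have hsum : ∀ a b, blk a b = ∑ k, Q k a b • E' k := by
    intro a b
    have hswap_blk : blk 1 0 = blk 0 1 := by ext f g; simp [blk, hswap 1 0]
    simp only [Fintype.sum_option, Q, E', vecMulVec_apply, Pi.star_apply]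
    fin_cases a <;> fin_cases b <;> simp [hswap_blk, ← hsum_one, ← hsum_μ]
  let e := Fintype.equivFin (Option m)
  refine ⟨_, Q ∘ e.symm, E' ∘ e.symm, fun k => ?_, fun k => ?_, fun a b f g => ?_⟩
  · show (Q (e.symm k)).PosSemidef
    cases e.symm k <;> exact posSemidef_vecMulVec_self_star _
  · show (E' (e.symm k)).PosSemidef
    cases e.symm k
    · exact hrest
    · exact hE _
  · calc M (a, f) (b, g) = (∑ k, Q k a b • E' k) f g := by rw [← hsum]; rfl
      _ = ∑ k, Q (e.symm k) a b * E' (e.symm k) f g := by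
        rw [← e.symm.sum_comp]; simp [Matrix.sum_apply]

end Matrix

section Qubit

variable {ι α : Type*} [Fintype ι] [DecidableEq ι]

def fillOn (X : Finset ι) (a : α) (f : {i // i ∈ Xᶜ} → α) : ι → α :=
  fun i => if h : i ∈ Xᶜ then f ⟨i, h⟩ else a

lemma fillOn_restrict {X : Finset ι} {x : ι → α} {a : α} (hx : ∀ i ∈ X, x i = a) :
    fillOn X a (fun i => x i.1) = x := by
  funext i
  by_cases h : i ∈ X <;> simp [fillOn, h, hx]

lemma pt_fillOn {N : ℕ} {X : Finset (Fin N)} (σ : Matrix (Fin N → Fin 2) (Fin N → Fin 2) ℂ)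
    (a b : Fin 2) (f g : {i // i ∈ Xᶜ} → Fin 2) :
    pt X σ (fillOn X a f) (fillOn X b g) = σ (fillOn X b f) (fillOn X a g) := by
  unfold pt
  congr 1 <;> funext i <;> by_cases h : i ∈ X <;> simp [fillOn, h]

end Qubit

open Matrix

/-- A PSD operator invariant under partial transposition of qubit `0` is biseparable
across the `1:(N-1)` bipartition at qubit `0`. -/
theorem stmt14 (N : ℕ) (hN : 2 ≤ N)
    (σ : Matrix (Fin N → Fin 2) (Fin N → Fin 2) ℂ) (hσ : σ.PosSemidef)
    (hpt : pt {⟨0, by omega⟩} σ = σ) :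
    SepAcross {⟨0, by omega⟩} σ := by
  set z : Fin N := ⟨0, by omega⟩
  have hz : z ∈ ({z} : Finset (Fin N)) := Finset.mem_singleton_self z
  let fill : Fin 2 × ({i // i ∈ ({z} : Finset (Fin N))ᶜ} → Fin 2) → Fin N → Fin 2 :=
    fun p => fillOn {z} p.1 p.2
  obtain ⟨K, Q, E, hQ, hE, hσ_eq⟩ := (hσ.submatrix fill).exists_sum_mul_of_swap_eq
    fun a b f g => (congrFun (congrFun hpt _) _).symm.trans (pt_fillOn σ a b f g)
  refine ⟨K, fun k => (Q k).submatrix (· ⟨z, hz⟩) (· ⟨z, hz⟩), E,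
    fun k => (hQ k).submatrix _, hE, fun x y => ?_⟩
  have hfill : ∀ x : Fin N → Fin 2, fillOn {z} (x z) (fun i => x i.1) = x :=
    fun x => fillOn_restrict (by simp)
  conv_lhs => rw [← hfill x, ← hfill y]
  exact hσ_eq (x z) (y z) _ _
end
end

section
/- Let N ≥ 2 and let ρ be a positive semidefinite N-qubit operator with Tr(ρ) = 1 and Tr(ρ·J_a) = 0 for each a ∈ {x, y, z}. Suppose there is a real α* > 1 such that the numbers u_a := α*·(Re Tr(ρ·J_a²) − N/4) + N/4, a ∈ {x,y,z}, satisfy the Tóth inequalities. Then for every real β with β ≥ 2^N/(α* − 1), the matrix σ = ((2^N + β)·ρ − 𝟙)/β satisfies Tr(σ) = 1, Tr(σ·J_a) = 0 for each a, and the numbers v_a := Re Tr(σ·J_a²) satisfy the Tóth inequalities. -/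
open scoped ComplexOrder

noncomputable section

/-- The three Pauli matrices `σx, σy, σz`. -/
def pauli3 : Fin 3 → Matrix (Fin 2) (Fin 2) ℂ :=
  ![!![0, 1; 1, 0], !![0, -Complex.I; Complex.I, 0], !![1, 0; 0, -1]]

/-- The `N`-qubit operator acting as `A` on qubit `i` and trivially elsewhere. -/
def embedAt {N : ℕ} (A : Matrix (Fin 2) (Fin 2) ℂ) (i : Fin N) :
    Matrix (Fin N → Fin 2) (Fin N → Fin 2) ℂ :=
  fun x y => A (x i) (y i) * ∏ j ∈ Finset.univ.erase i, (if x j = y j then (1 : ℂ) else 0)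

/-- The collective spin component `J_a = (1/2) Σ_i σ_a^{(i)}`. -/
def Jspin (N : ℕ) (a : Fin 3) : Matrix (Fin N → Fin 2) (Fin N → Fin 2) ℂ :=
  (2 : ℂ)⁻¹ • ∑ i : Fin N, embedAt (pauli3 a) i

/-- The Tóth inequalities for the second moments `(v x, v y, v z)` of the collective
spin of an unpolarized `N`-qubit state. -/
def TothIneqs (N : ℕ) (v : Fin 3 → ℝ) : Prop :=
  (v 0 + v 1 + v 2 ≤ (N : ℝ) * (N + 2) / 4) ∧
  ((N : ℝ) / 2 ≤ v 0 + v 1 + v 2) ∧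
  (∀ π : Equiv.Perm (Fin 3), v (π 0) + v (π 1) - ((N : ℝ) - 1) * v (π 2) ≤ (N : ℝ) / 2) ∧
  (∀ π : Equiv.Perm (Fin 3),
    (N : ℝ) * ((N : ℝ) - 2) / 4 ≤ ((N : ℝ) - 1) * (v (π 0) + v (π 1)) - v (π 2))


/-!
Since Pauli matrices are traceless involutions, `Tr J_a = 0` and `Tr J_a² = N 2^N / 4`, so the
second moments of `σ` are `v_a = N/4 + ((2^N + β)/β) (Re Tr(ρ J_a²) - N/4)`. Hence
`v = t u + (1 - t) (N/4, N/4, N/4)` with `t = (2^N + β)/(β α*)`, and `β ≥ 2^N/(α* - 1)` says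
exactly that `t ≤ 1`. The Tóth inequalities cut out a convex set (an intersection of
half-spaces) containing `(N/4, N/4, N/4)`, the moments of the maximally mixed state.
-/

namespace Matrix

variable {ι n R : Type*} [Fintype ι] [CommSemiring R]

def piKron (f : ι → Matrix n n R) : Matrix (ι → n) (ι → n) R :=
  of fun x y => ∏ i, f i (x i) (y i)

theorem piKron_mul [DecidableEq ι] [Fintype n] (f g : ι → Matrix n n R) :
    piKron f * piKron g = piKron (f * g) := by
  ext x y
  simp only [piKron, mul_apply, of_apply, Pi.mul_apply, ← Finset.prod_mul_distrib]
  rw [Finset.prod_univ_sum, Fintype.piFinset_univ]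

theorem piKron_one [DecidableEq ι] [DecidableEq n] : piKron (1 : ι → Matrix n n R) = 1 := by
  ext x y
  simp only [piKron, of_apply, Pi.one_apply, one_apply, Finset.prod_ite_zero,
    Finset.prod_const_one, funext_iff, Finset.mem_univ, true_implies]

theorem trace_piKron [DecidableEq ι] [Fintype n] (f : ι → Matrix n n R) :
    (piKron f).trace = ∏ i, (f i).trace := by
  simp only [trace, diag, piKron, of_apply]
  rw [Finset.prod_univ_sum, Fintype.piFinset_univ]

theorem trace_piKron_eq_zero [DecidableEq ι] [Fintype n] {f : ι → Matrix n n R} (i : ι)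
    (hi : (f i).trace = 0) :
    (piKron f).trace = 0 := by
  rw [trace_piKron]
  exact Finset.prod_eq_zero (Finset.mem_univ i) hi

end Matrix

open Matrix

theorem embedAt_eq_piKron {N : ℕ} (A : Matrix (Fin 2) (Fin 2) ℂ) (i : Fin N) :
    embedAt A i = piKron (Pi.mulSingle i A) := by
  ext x y
  simp only [embedAt, piKron, of_apply]
  rw [← Finset.mul_prod_erase Finset.univ _ (Finset.mem_univ i), Pi.mulSingle_eq_same]
  congr 1
  refine Finset.prod_congr rfl fun j hj => ?_
  rw [Pi.mulSingle_eq_of_ne (Finset.ne_of_mem_erase hj), one_apply]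

theorem pauli3_mul_self (a : Fin 3) : pauli3 a * pauli3 a = 1 := by
  fin_cases a <;> ext i j <;> fin_cases i <;> fin_cases j <;> simp [pauli3]

theorem trace_pauli3 (a : Fin 3) : (pauli3 a).trace = 0 := by
  fin_cases a <;> simp [pauli3, trace_fin_two]

theorem trace_embedAt_pauli3 {N : ℕ} (a : Fin 3) (i : Fin N) :
    (embedAt (pauli3 a) i).trace = 0 := by
  rw [embedAt_eq_piKron]
  refine trace_piKron_eq_zero i ?_
  rw [Pi.mulSingle_eq_same, trace_pauli3]

theorem trace_embedAt_pauli3_mul {N : ℕ} (a : Fin 3) (i j : Fin N) :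
    (embedAt (pauli3 a) i * embedAt (pauli3 a) j).trace = if i = j then 2 ^ N else 0 := by
  rw [embedAt_eq_piKron, embedAt_eq_piKron, piKron_mul]
  split_ifs with hij
  · rw [hij, ← Pi.mulSingle_mul, pauli3_mul_self, Pi.mulSingle_one, piKron_one, trace_one]
    simp
  · refine trace_piKron_eq_zero i ?_
    rw [Pi.mul_apply, Pi.mulSingle_eq_same, Pi.mulSingle_eq_of_ne hij, mul_one, trace_pauli3]

theorem trace_Jspin (N : ℕ) (a : Fin 3) : (Jspin N a).trace = 0 := by
  simp [Jspin, trace_sum, trace_embedAt_pauli3]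

theorem trace_Jspin_mul_self (N : ℕ) (a : Fin 3) :
    (Jspin N a * Jspin N a).trace = N * 2 ^ N / 4 := by
  simp only [Jspin, smul_mul_smul_comm, Finset.sum_mul_sum, trace_smul, trace_sum,
    trace_embedAt_pauli3_mul, Finset.sum_ite_eq, Finset.mem_univ, if_true,
    Finset.sum_const, Finset.card_univ, Fintype.card_fin, smul_eq_mul, nsmul_eq_mul]
  ring

theorem convex_setOf_tothIneqs (N : ℕ) : Convex ℝ {v | TothIneqs N v} := by
  rintro u ⟨hu₁, hu₂, hu₃, hu₄⟩ v ⟨hv₁, hv₂, hv₃, hv₄⟩ a b ha hb hab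
  obtain rfl : b = 1 - a := by linarith
  refine ⟨?_, ?_, fun π => ?_, fun π => ?_⟩ <;>
    simp only [Pi.add_apply, Pi.smul_apply, smul_eq_mul]
  · linear_combination a * hu₁ + (1 - a) * hv₁
  · linear_combination a * hu₂ + (1 - a) * hv₂
  · linear_combination a * hu₃ π + (1 - a) * hv₃ π
  · linear_combination a * hu₄ π + (1 - a) * hv₄ π

theorem tothIneqs_const (N : ℕ) (hN : 1 ≤ N) : TothIneqs N fun _ => (N : ℝ) / 4 := by
  have hN' : (1 : ℝ) ≤ N := by exact_mod_cast hN
  refine ⟨?_, ?_, fun _ => ?_, fun _ => ?_⟩ <;> nlinarith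

theorem trace_smul_smul_sub_one_mul {n : Type*} [Fintype n] [DecidableEq n]
    (r s : ℂ) (ρ M : Matrix n n ℂ) :
    ((r • (s • ρ - 1)) * M).trace = r * (s * (ρ * M).trace - M.trace) := by
  simp only [smul_mul, sub_mul, one_mul, trace_smul, trace_sub, smul_eq_mul]

theorem stmt18_general (N : ℕ) (hN : 2 ≤ N)
    (ρ : Matrix (Fin N → Fin 2) (Fin N → Fin 2) ℂ)
    (htr : ρ.trace = 1)
    (hJ : ∀ a : Fin 3, (ρ * Jspin N a).trace = 0)
    (αs : ℝ) (hαs : 1 < αs)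
    (hToth : TothIneqs N (fun a =>
      αs * (((ρ * (Jspin N a * Jspin N a)).trace).re - (N : ℝ) / 4) + (N : ℝ) / 4))
    (β : ℝ) (hβ : (2 : ℝ) ^ N / (αs - 1) ≤ β) :
    ((β : ℂ)⁻¹ • ((((2 : ℝ) ^ N + β : ℝ) : ℂ) • ρ -
        (1 : Matrix (Fin N → Fin 2) (Fin N → Fin 2) ℂ))).trace = 1 ∧
    (∀ a : Fin 3,
      (((β : ℂ)⁻¹ • ((((2 : ℝ) ^ N + β : ℝ) : ℂ) • ρ -
          (1 : Matrix (Fin N → Fin 2) (Fin N → Fin 2) ℂ))) * Jspin N a).trace = 0) ∧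
    TothIneqs N (fun a =>
      ((((β : ℂ)⁻¹ • ((((2 : ℝ) ^ N + β : ℝ) : ℂ) • ρ -
          (1 : Matrix (Fin N → Fin 2) (Fin N → Fin 2) ℂ))) *
        (Jspin N a * Jspin N a)).trace).re) := by
  have hP : (0 : ℝ) < 2 ^ N := by positivity
  have hβ₀ : 0 < β := (div_pos hP (by linarith)).trans_le hβ
  have hβα : 2 ^ N ≤ (αs - 1) * β := (div_le_iff₀' (by linarith)).mp hβ
  refine ⟨?_, fun a => ?_, ?_⟩
  · rw [← mul_one (_ • _ : Matrix _ _ ℂ), trace_smul_smul_sub_one_mul, mul_one, htr,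
      trace_one]
    field_simp
    push_cast
    simp
  · rw [trace_smul_smul_sub_one_mul, hJ a, trace_Jspin]
    simp
  · set t := ((2 : ℝ) ^ N + β) / (β * αs)
    have ht : t ≤ 1 := by
      rw [div_le_one (by positivity)]
      linarith
    have hconv := convex_setOf_tothIneqs N (Set.mem_ofPred.mpr hToth)
      (Set.mem_ofPred.mpr (tothIneqs_const N (by omega))) (by positivity) (sub_nonneg.mpr ht)
      (add_sub_cancel t 1)
    convert Set.mem_ofPred.mp hconv using 2 with a
    have hcast : ((N : ℂ) * 2 ^ N / 4) = ((N * 2 ^ N / 4 : ℝ) : ℂ) := by push_cast; ring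
    rw [trace_smul_smul_sub_one_mul, trace_Jspin_mul_self, hcast, ← Complex.ofReal_inv,
      Complex.re_ofReal_mul, Complex.sub_re, Complex.re_ofReal_mul, Complex.ofReal_re]
    simp only [Pi.add_apply, Pi.smul_apply, smul_eq_mul, t]
    field_simp
    ring

/-- Compatibility with a global separable state via the inverse reduction map and
the Tóth inequalities. -/
theorem stmt18 (N : ℕ) (hN : 2 ≤ N)
    (ρ : Matrix (Fin N → Fin 2) (Fin N → Fin 2) ℂ) (hρ : ρ.PosSemidef)
    (htr : ρ.trace = 1)
    (hJ : ∀ a : Fin 3, (ρ * Jspin N a).trace = 0)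
    (αs : ℝ) (hαs : 1 < αs)
    (hToth : TothIneqs N (fun a =>
      αs * (((ρ * (Jspin N a * Jspin N a)).trace).re - (N : ℝ) / 4) + (N : ℝ) / 4))
    (β : ℝ) (hβ : (2 : ℝ) ^ N / (αs - 1) ≤ β) :
    ((β : ℂ)⁻¹ • ((((2 : ℝ) ^ N + β : ℝ) : ℂ) • ρ -
        (1 : Matrix (Fin N → Fin 2) (Fin N → Fin 2) ℂ))).trace = 1 ∧
    (∀ a : Fin 3,
      (((β : ℂ)⁻¹ • ((((2 : ℝ) ^ N + β : ℝ) : ℂ) • ρ -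
          (1 : Matrix (Fin N → Fin 2) (Fin N → Fin 2) ℂ))) * Jspin N a).trace = 0) ∧
    TothIneqs N (fun a =>
      ((((β : ℂ)⁻¹ • ((((2 : ℝ) ^ N + β : ℝ) : ℂ) • ρ -
          (1 : Matrix (Fin N → Fin 2) (Fin N → Fin 2) ℂ))) *
        (Jspin N a * Jspin N a)).trace).re) :=
  stmt18_general N hN ρ htr hJ αs hαs hToth β hβ
end
end

section
/- Let N ≥ 1, d ≥ 2, let ρ be a positive semidefinite complex matrix indexed by (Fin N → Fin d) with Tr(ρ) = 1, and let A_1, …, A_m be Hermitian matrices of the same size with Tr(A_j) = 0 for every j. Let P ∈ ℝ^m be the vector with P_j = Re Tr(ρ·A_j), and let L ⊆ ℝ^m be the convex hull of a finite set W with 0 ∈ L. If there is a real α* > 1 with α*·P ∈ L, then for every real β with β ≥ d^N/(α* − 1), the vector Q ∈ ℝ^m with Q_j = Re Tr(σ·A_j), where σ = ((d^N + β)·ρ − 𝟙)/β, satisfies Q ∈ L. -/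
/-!
The observables are traceless, so `𝟙` contributes nothing to the correlations and those of `σ`
are `(d^N + β)/β` times those of `ρ`. The bound on `β` gives `(d^N + β)/β ≤ α*`, so `Q` lies on
the segment from `0` to `α* P`, inside the convex set `L`.
-/

open scoped ComplexOrder

theorem Matrix.trace_smul_smul_sub_one_mul {n R : Type*} [Fintype n] [DecidableEq n] [CommRing R]
    (a b : R) (ρ A : Matrix n n R) (hA : A.trace = 0) :
    ((a • (b • ρ - 1)) * A).trace = a * b * (ρ * A).trace := by
  rw [Matrix.smul_mul, Matrix.trace_smul, Matrix.sub_mul, Matrix.trace_sub, Matrix.one_mul, hA,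
    sub_zero, Matrix.smul_mul, Matrix.trace_smul, smul_eq_mul, smul_eq_mul, mul_assoc]

/-- With `β = 0` the left-hand side is `0` by the convention `0⁻¹ = 0`. -/
theorem inv_mul_add_self_div_mem_Icc {D α β : ℝ} (hD : 0 ≤ D) (hα : 1 < α)
    (hβ : D / (α - 1) ≤ β) : β⁻¹ * (D + β) / α ∈ Set.Icc 0 1 := by
  have hβ0 : 0 ≤ β := (div_nonneg hD (sub_nonneg.2 hα.le)).trans hβ
  refine ⟨by positivity, div_le_one_of_le₀ ?_ (by linarith)⟩
  rcases hβ0.eq_or_lt with rfl | hβ0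
  · simp only [inv_zero, zero_mul]
    linarith
  · rw [inv_mul_le_iff₀ hβ0]
    linarith [(div_le_iff₀' (sub_pos.2 hα)).1 hβ]

theorem stmt19_general (N d m : ℕ)
    (ρ : Matrix (Fin N → Fin d) (Fin N → Fin d) ℂ)
    (A : Fin m → Matrix (Fin N → Fin d) (Fin N → Fin d) ℂ)
    (hA0 : ∀ j, (A j).trace = 0)
    (W : Finset (Fin m → ℝ))
    (h0 : (0 : Fin m → ℝ) ∈ convexHull ℝ (W : Set (Fin m → ℝ)))
    (αs : ℝ) (hαs : 1 < αs)
    (hP : (fun j => αs * ((ρ * A j).trace).re) ∈ convexHull ℝ (W : Set (Fin m → ℝ)))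
    (β : ℝ) (hβ : (d : ℝ) ^ N / (αs - 1) ≤ β) :
    (fun j =>
        ((((β : ℂ)⁻¹ • ((((d : ℝ) ^ N + β : ℝ) : ℂ) • ρ -
            (1 : Matrix (Fin N → Fin d) (Fin N → Fin d) ℂ))) * A j).trace).re)
      ∈ convexHull ℝ (W : Set (Fin m → ℝ)) := by
  set t := β⁻¹ * ((d : ℝ) ^ N + β) / αs
  have ht : t ∈ Set.Icc 0 1 := inv_mul_add_self_div_mem_Icc (by positivity) hαs hβ
  have hQ : (fun j =>
        ((((β : ℂ)⁻¹ • ((((d : ℝ) ^ N + β : ℝ) : ℂ) • ρ -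
            (1 : Matrix (Fin N → Fin d) (Fin N → Fin d) ℂ))) * A j).trace).re)
      = t • fun j => αs * ((ρ * A j).trace).re := by
    funext j
    rw [Matrix.trace_smul_smul_sub_one_mul _ _ _ _ (hA0 j), ← Complex.ofReal_inv,
      ← Complex.ofReal_mul, Complex.re_ofReal_mul, Pi.smul_apply, smul_eq_mul,
      ← mul_assoc, div_mul_cancel₀ _ (by positivity)]
  rw [hQ]
  exact (convex_convexHull ℝ _).smul_mem_of_zero_mem h0 hP ht

/-- Sufficient criterion for compatibility with a local-hidden-variable model:
if `α* P` lies in the local polytope `L = conv W` for some `α* > 1`, then the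
correlations of `σ = ((d^N + β)ρ - 𝟙)/β` lie in `L` for all `β ≥ d^N/(α* - 1)`. -/
theorem stmt19 (N d m : ℕ) (hN : 1 ≤ N) (hd : 2 ≤ d)
    (ρ : Matrix (Fin N → Fin d) (Fin N → Fin d) ℂ) (hρ : ρ.PosSemidef)
    (htr : ρ.trace = 1)
    (A : Fin m → Matrix (Fin N → Fin d) (Fin N → Fin d) ℂ)
    (hA : ∀ j, (A j).IsHermitian) (hA0 : ∀ j, (A j).trace = 0)
    (W : Finset (Fin m → ℝ))
    (h0 : (0 : Fin m → ℝ) ∈ convexHull ℝ (W : Set (Fin m → ℝ)))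
    (αs : ℝ) (hαs : 1 < αs)
    (hP : (fun j => αs * ((ρ * A j).trace).re) ∈ convexHull ℝ (W : Set (Fin m → ℝ)))
    (β : ℝ) (hβ : (d : ℝ) ^ N / (αs - 1) ≤ β) :
    (fun j =>
        ((((β : ℂ)⁻¹ • ((((d : ℝ) ^ N + β : ℝ) : ℂ) • ρ -
            (1 : Matrix (Fin N → Fin d) (Fin N → Fin d) ℂ))) * A j).trace).re)
      ∈ convexHull ℝ (W : Set (Fin m → ℝ)) :=
  stmt19_general N d m ρ A hA0 W h0 αs hαs hP β hβ
end
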